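/- arXiv:2309.17152 — 4 statements merged into one kernel-verified Lean document; each statement's English description precedes it below -/
import Mathlib

section
/- Let p > 0, φ > 0, and let w : (0,∞) → (0,∞) be a measurable log-convex function such that there exist C > 0 and 0 ≤ λ < φ with w(x) ≤ C e^{λx} for all x > 0. Then the function x ↦ p ∫₀^∞ e^{-φy} w(x+y) dy is finite, positive, and log-convex on (0,∞). -/
/-!
On the pointwise level, log-convexity of `w` makes `x ↦ e^{-φy} w(x+y)` log-convex for each
`y > 0`, and Hölder's inequality with exponents `1/t` and `1/(1-t)` carries log-convexity
through the integral in `y`. The bound `w(x) ≤ C e^{λx}` with `λ < φ` dominates the integrand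
by a multiple of `e^{-(φ-λ)y}`, so the integral is finite.
-/

open MeasureTheory Set Real

theorem Real.mul_rpow_mul_mul_rpow_one_sub {c a b : ℝ} (t : ℝ) (hc : 0 ≤ c) (ha : 0 ≤ a)
    (hb : 0 ≤ b) : (c * a) ^ t * (c * b) ^ (1 - t) = c * (a ^ t * b ^ (1 - t)) := by
  rw [mul_rpow hc ha, mul_rpow hc hb, mul_mul_mul_comm, ← rpow_add' hc (by simp),
    add_sub_cancel, rpow_one]

section Integral

variable {α : Type*} [MeasurableSpace α] {μ : Measure α}

theorem setIntegral_pos_of_forall_pos {f : α → ℝ} {s : Set α} (hs : MeasurableSet s)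
    (hμs : μ s ≠ 0) (hf : IntegrableOn f s μ) (hpos : ∀ a ∈ s, 0 < f a) :
    0 < ∫ a in s, f a ∂μ := by
  refine (setIntegral_pos_iff_support_of_nonneg_ae ?_ hf).2 ?_
  · filter_upwards [ae_restrict_mem hs] with a ha using (hpos a ha).le
  · exact (pos_iff_ne_zero.2 hμs).trans_le (measure_mono fun a ha => ⟨(hpos a ha).ne', ha⟩)

theorem integral_le_integral_rpow_mul_integral_rpow {f₀ f₁ f₂ : α → ℝ} {t : ℝ}
    (ht : t ∈ Icc (0 : ℝ) 1) (hf₀ : Integrable f₀ μ) (hf₁ : Integrable f₁ μ)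
    (hf₂ : Integrable f₂ μ) (h₀ : 0 ≤ᵐ[μ] f₀) (h₁ : 0 ≤ᵐ[μ] f₁) (h₂ : 0 ≤ᵐ[μ] f₂)
    (hle : ∀ᵐ a ∂μ, f₀ a ≤ f₁ a ^ t * f₂ a ^ (1 - t)) :
    ∫ a, f₀ a ∂μ ≤ (∫ a, f₁ a ∂μ) ^ t * (∫ a, f₂ a ∂μ) ^ (1 - t) := by
  have ht' : 0 ≤ 1 - t := sub_nonneg.2 ht.2
  have hI₁ := integral_nonneg_of_ae h₁
  have hI₂ := integral_nonneg_of_ae h₂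
  rw [← ENNReal.ofReal_le_ofReal_iff (by positivity), ofReal_integral_eq_lintegral_ofReal hf₀ h₀,
    ENNReal.ofReal_mul (by positivity), ← ENNReal.ofReal_rpow_of_nonneg hI₁ ht.1,
    ← ENNReal.ofReal_rpow_of_nonneg hI₂ ht', ofReal_integral_eq_lintegral_ofReal hf₁ h₁,
    ofReal_integral_eq_lintegral_ofReal hf₂ h₂]
  calc ∫⁻ a, ENNReal.ofReal (f₀ a) ∂μ
      ≤ ∫⁻ a, ENNReal.ofReal (f₁ a) ^ t * ENNReal.ofReal (f₂ a) ^ (1 - t) ∂μ := by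
        refine lintegral_mono_ae ?_
        filter_upwards [h₁, h₂, hle] with a ha₁ ha₂ ha
        rw [ENNReal.ofReal_rpow_of_nonneg ha₁ ht.1, ENNReal.ofReal_rpow_of_nonneg ha₂ ht',
          ← ENNReal.ofReal_mul (rpow_nonneg ha₁ t)]
        exact ENNReal.ofReal_le_ofReal ha
    _ ≤ _ := ENNReal.lintegral_mul_norm_pow_le hf₁.aemeasurable.ennreal_ofReal
        hf₂.aemeasurable.ennreal_ofReal ht.1 ht' (by ring)

end Integral

theorem integrableOn_exp_neg_mul_mul_comp_const_add {w : ℝ → ℝ} {φ C lam x : ℝ}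
    (hw : Measurable w) (hlam : lam < φ) (hx : 0 ≤ x)
    (hbound : ∀ z > (0 : ℝ), ‖w z‖ ≤ C * exp (lam * z)) :
    IntegrableOn (fun y => exp (-φ * y) * w (x + y)) (Ioi 0) := by
  have hdom : IntegrableOn (fun y => C * exp (lam * x) * exp (-(φ - lam) * y)) (Ioi 0) :=
    (exp_neg_integrableOn_Ioi 0 (sub_pos.2 hlam)).const_mul _
  refine hdom.mono' (by fun_prop) ?_
  filter_upwards [ae_restrict_mem measurableSet_Ioi] with y (hy : 0 < y)
  calc ‖exp (-φ * y) * w (x + y)‖ = exp (-φ * y) * ‖w (x + y)‖ := by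
        rw [norm_mul, norm_of_nonneg (exp_pos _).le]
    _ ≤ exp (-φ * y) * (C * exp (lam * (x + y))) :=
        mul_le_mul_of_nonneg_left (hbound _ (by linarith)) (exp_pos _).le
    _ = C * exp (lam * x) * exp (-(φ - lam) * y) := by
        rw [mul_left_comm, mul_assoc, ← exp_add, ← exp_add]
        ring_nf

theorem Zprime_logConvex_general
    (p φ : ℝ) (hp : 0 < p)
    (w : ℝ → ℝ) (hwmeas : Measurable w)
    (hwpos : ∀ x > (0 : ℝ), 0 < w x)
    (hwlc : ∀ x₁ > (0 : ℝ), ∀ x₂ > (0 : ℝ), ∀ t ∈ Set.Icc (0 : ℝ) 1,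
      w (t * x₁ + (1 - t) * x₂) ≤ w x₁ ^ t * w x₂ ^ (1 - t))
    (C lam : ℝ) (hlamφ : lam < φ)
    (hwbound : ∀ x > (0 : ℝ), w x ≤ C * Real.exp (lam * x))
    (F : ℝ → ℝ)
    (hF : ∀ x, F x = p * ∫ y in Set.Ioi (0 : ℝ), Real.exp (-φ * y) * w (x + y)) :
    (∀ x > (0 : ℝ),
      IntegrableOn (fun y => Real.exp (-φ * y) * w (x + y)) (Set.Ioi 0) ∧ 0 < F x) ∧
    ∀ x₁ > (0 : ℝ), ∀ x₂ > (0 : ℝ), ∀ t ∈ Set.Icc (0 : ℝ) 1,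
      F (t * x₁ + (1 - t) * x₂) ≤ F x₁ ^ t * F x₂ ^ (1 - t) := by
  set g : ℝ → ℝ → ℝ := fun x y => exp (-φ * y) * w (x + y)
  have hg_int : ∀ x > (0 : ℝ), IntegrableOn (g x) (Ioi 0) := fun x hx =>
    integrableOn_exp_neg_mul_mul_comp_const_add hwmeas hlamφ hx.le fun z hz => by
      simpa only [norm_of_nonneg (hwpos z hz).le] using hwbound z hz
  have hg_pos : ∀ x > (0 : ℝ), ∀ y ∈ Ioi (0 : ℝ), 0 < g x y := fun x hx y hy =>
    mul_pos (exp_pos _) (hwpos _ (add_pos hx hy))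
  have hg_nonneg : ∀ x > (0 : ℝ), 0 ≤ᵐ[volume.restrict (Ioi 0)] g x := fun x hx =>
    (ae_restrict_mem measurableSet_Ioi).mono fun y hy => (hg_pos x hx y hy).le
  have hI_pos : ∀ x > (0 : ℝ), 0 < ∫ y in Ioi 0, g x y := fun x hx =>
    setIntegral_pos_of_forall_pos measurableSet_Ioi (by simp) (hg_int x hx) (hg_pos x hx)
  refine ⟨fun x hx => ⟨hg_int x hx, hF x ▸ mul_pos hp (hI_pos x hx)⟩,
    fun x₁ hx₁ x₂ hx₂ t ht => ?_⟩
  have hxt : 0 < t * x₁ + (1 - t) * x₂ :=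
    convex_Ioi (0 : ℝ) hx₁ hx₂ ht.1 (sub_nonneg.2 ht.2) (by ring)
  have hg_lc : ∀ y ∈ Ioi (0 : ℝ),
      g (t * x₁ + (1 - t) * x₂) y ≤ g x₁ y ^ t * g x₂ y ^ (1 - t) := by
    intro y (hy : 0 < y)
    have hw₁ := hwpos _ (add_pos hx₁ hy)
    have hw₂ := hwpos _ (add_pos hx₂ hy)
    simp only [g, mul_rpow_mul_mul_rpow_one_sub t (exp_pos _).le hw₁.le hw₂.le,
      show t * x₁ + (1 - t) * x₂ + y = t * (x₁ + y) + (1 - t) * (x₂ + y) by ring]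
    exact mul_le_mul_of_nonneg_left (hwlc _ (add_pos hx₁ hy) _ (add_pos hx₂ hy) t ht)
      (exp_pos _).le
  rw [hF, hF, hF, mul_rpow_mul_mul_rpow_one_sub t hp.le (hI_pos x₁ hx₁).le (hI_pos x₂ hx₂).le]
  refine mul_le_mul_of_nonneg_left ?_ hp.le
  exact integral_le_integral_rpow_mul_integral_rpow ht (hg_int _ hxt) (hg_int x₁ hx₁)
    (hg_int x₂ hx₂) (hg_nonneg _ hxt) (hg_nonneg x₁ hx₁) (hg_nonneg x₂ hx₂)
    ((ae_restrict_mem measurableSet_Ioi).mono hg_lc)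

/-- For p > 0, φ > 0 and w measurable, positive and log-convex
on (0,∞) with w(x) ≤ C e^{λx} (0 ≤ λ < φ), the function
x ↦ p ∫₀^∞ e^{-φy} w(x+y) dy is finite, positive and log-convex on (0,∞). -/
theorem Zprime_logConvex
    (p φ : ℝ) (hp : 0 < p) (hφ : 0 < φ)
    (w : ℝ → ℝ) (hwmeas : Measurable w)
    (hwpos : ∀ x > (0 : ℝ), 0 < w x)
    (hwlc : ∀ x₁ > (0 : ℝ), ∀ x₂ > (0 : ℝ), ∀ t ∈ Set.Icc (0 : ℝ) 1,
      w (t * x₁ + (1 - t) * x₂) ≤ w x₁ ^ t * w x₂ ^ (1 - t))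
    (C lam : ℝ) (hC : 0 < C) (hlam0 : 0 ≤ lam) (hlamφ : lam < φ)
    (hwbound : ∀ x > (0 : ℝ), w x ≤ C * Real.exp (lam * x))
    (F : ℝ → ℝ)
    (hF : ∀ x, F x = p * ∫ y in Set.Ioi (0 : ℝ), Real.exp (-φ * y) * w (x + y)) :
    (∀ x > (0 : ℝ),
      IntegrableOn (fun y => Real.exp (-φ * y) * w (x + y)) (Set.Ioi 0) ∧ 0 < F x) ∧
    ∀ x₁ > (0 : ℝ), ∀ x₂ > (0 : ℝ), ∀ t ∈ Set.Icc (0 : ℝ) 1,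
      F (t * x₁ + (1 - t) * x₂) ≤ F x₁ ^ t * F x₂ ^ (1 - t) :=
  Zprime_logConvex_general p φ hp w hwmeas hwpos hwlc C lam hlamφ hwbound F hF
end

section
/- Let β > 0 and let Z : [0,∞) → ℝ be continuously differentiable with Z′(x) > 0 for all x ≥ 0 and Z′(x) → ∞ as x → ∞. Define g(x,y) = (Z(y) − Z(x))/(y − x − β) on the domain D = {(x,y) : x ≥ 0, y > x + β}. Then g attains its infimum over D: there exists (a*,b*) ∈ D with g(a*,b*) ≤ g(x,y) for all (x,y) ∈ D. -/
open Filter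

/-- If Z is continuously differentiable on [0,∞) with Z′ > 0
and Z′(x) → ∞, then g(x,y) = (Z(y) − Z(x))/(y − x − β) attains its infimum
over D = {x ≥ 0, y > x + β}. -/
theorem g_attains_infimum
    (β : ℝ) (hβ : 0 < β)
    (Z Z' : ℝ → ℝ)
    (hZderiv : ∀ x ∈ Set.Ici (0 : ℝ), HasDerivAt Z (Z' x) x)
    (hZ'cont : ContinuousOn Z' (Set.Ici 0))
    (hZ'pos : ∀ x ≥ (0 : ℝ), 0 < Z' x)
    (htop : Tendsto Z' atTop atTop)
    (g : ℝ × ℝ → ℝ)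
    (hg : ∀ q : ℝ × ℝ, g q = (Z q.2 - Z q.1) / (q.2 - q.1 - β))
    (D : Set (ℝ × ℝ))
    (hD : D = {q : ℝ × ℝ | 0 ≤ q.1 ∧ q.1 + β < q.2}) :
    ∃ q ∈ D, ∀ r ∈ D, g q ≤ g r := by
  have hZcont : ContinuousOn Z (Set.Ici 0) := fun x hx =>
    (hZderiv x hx).continuousAt.continuousWithinAt
  set M : ℝ := g (0, 2*β) with hM
  set T : ℝ := max M 0 + 1 with hT
  have hT0 : 0 < T := by positivity
  have hMT : M < T := by
    have := le_max_left M 0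
    simp only [hT]; linarith
  -- threshold R for Z' ≥ 2T
  obtain ⟨R₀, hR₀⟩ : ∃ R₀ : ℝ, ∀ t ≥ R₀, 2*T ≤ Z' t :=
    eventually_atTop.mp (htop.eventually (eventually_ge_atTop (2*T)))
  set R : ℝ := max R₀ (2*β) with hR
  have hRβ : 2*β ≤ R := le_max_right _ _
  have hR0 : 0 < R := lt_of_lt_of_le (by linarith) hRβ
  -- min of Z' on [0, 2R]
  obtain ⟨t0, ht0mem, ht0⟩ :=
    (isCompact_Icc (a := (0:ℝ)) (b := 2*R)).exists_isMinOn
      (Set.nonempty_Icc.mpr (by linarith))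
      (hZ'cont.mono (fun t ht => ht.1))
  set m : ℝ := Z' t0 with hm
  have hm0 : 0 < m := hZ'pos t0 ht0mem.1
  set δ : ℝ := min β (m*β/T) with hδ
  have hδ0 : 0 < δ := lt_min hβ (by positivity)
  have hδβ : δ ≤ β := min_le_left _ _
  have hδm : T * δ ≤ m * β := by
    have := min_le_right β (m*β/T)
    calc T * δ ≤ T * (m*β/T) := by nlinarith
    _ = m * β := by field_simp
  -- MVT on Icc 0 (2R)
  have mvtA : ∀ x ∈ Set.Icc (0:ℝ) (2*R), ∀ y ∈ Set.Icc (0:ℝ) (2*R), x ≤ y →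
      m * (y - x) ≤ Z y - Z x := by
    apply (convex_Icc (0:ℝ) (2*R)).mul_sub_le_image_sub_of_le_deriv
      (hZcont.mono (fun t ht => ht.1))
    · intro t ht
      rw [interior_Icc] at ht
      exact ((hZderiv t ht.1.le).differentiableAt).differentiableWithinAt
    · intro t ht
      rw [interior_Icc] at ht
      rw [(hZderiv t ht.1.le).deriv]
      exact ht0 ⟨ht.1.le, ht.2.le⟩
  -- MVT on Ici R
  have mvtB : ∀ x ∈ Set.Ici R, ∀ y ∈ Set.Ici R, x ≤ y →
      (2*T) * (y - x) ≤ Z y - Z x := by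
    apply (convex_Ici R).mul_sub_le_image_sub_of_le_deriv
      (hZcont.mono (fun t ht => le_trans hR0.le ht))
    · intro t ht
      rw [interior_Ici] at ht
      exact ((hZderiv t (le_trans hR0.le ht.le)).differentiableAt).differentiableWithinAt
    · intro t ht
      rw [interior_Ici] at ht
      rw [(hZderiv t (le_trans hR0.le ht.le)).deriv]
      exact hR₀ t (le_max_left _ _ |>.trans ht.le)
  -- The compact set K
  set K : Set (ℝ × ℝ) :=
    (Set.Icc (0:ℝ) R ×ˢ Set.Icc β (2*R)) ∩ {q : ℝ × ℝ | q.1 + β + δ ≤ q.2} with hK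
  have hKcompact : IsCompact K :=
    ((isCompact_Icc.prod isCompact_Icc)).inter_right
      (isClosed_le (by fun_prop) continuous_snd)
  have hKD : K ⊆ D := by
    rintro ⟨x, y⟩ ⟨⟨hx, hy⟩, hxy⟩
    rw [hD]
    exact ⟨hx.1, by simp only [Set.mem_setOf_eq] at hxy ⊢; linarith⟩
  have hq0K : ((0:ℝ), 2*β) ∈ K := by
    simp only [hK, Set.mem_inter_iff, Set.mem_prod, Set.mem_Icc, Set.mem_setOf_eq]
    refine ⟨⟨⟨le_rfl, hR0.le⟩, ?_, ?_⟩, ?_⟩ <;> linarith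
  -- continuity of g on K
  have hgcont : ContinuousOn g K := by
    have hden : ∀ q ∈ K, q.2 - q.1 - β ≠ 0 := by
      rintro ⟨x, y⟩ ⟨⟨hx, hy⟩, hxy⟩
      simp only [Set.mem_setOf_eq] at hxy
      have : 0 < y - x - β := by linarith
      linarith
    have h1 : ContinuousOn (fun q : ℝ × ℝ => (Z q.2 - Z q.1) / (q.2 - q.1 - β)) K := by
      apply ContinuousOn.div
      · apply ContinuousOn.sub
        · exact hZcont.comp continuousOn_snd (fun q hq => le_trans hβ.le hq.1.2.1)
        · exact hZcont.comp continuousOn_fst (fun q hq => hq.1.1.1)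
      · fun_prop
      · exact hden
    exact h1.congr (fun q _ => hg q)
  obtain ⟨q, hqK, hqmin⟩ := hKcompact.exists_isMinOn ⟨_, hq0K⟩ hgcont
  refine ⟨q, hKD hqK, ?_⟩
  rintro ⟨x, y⟩ hr
  rw [hD] at hr
  obtain ⟨hx0, hxy⟩ := hr
  simp only at hx0 hxy
  by_cases hmem : (x, y) ∈ K
  · exact hqmin hmem
  -- outside K: show T ≤ g (x,y)
  have hd : 0 < y - x - β := by linarith
  have key : T * (y - x - β) ≤ Z y - Z x := by
    by_cases hxR : x ≤ R
    · by_cases hyR : y ≤ 2*R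
      · -- case 1: near diagonal
        have hyδ : y < x + β + δ := by
          by_contra h
          push_neg at h
          exact hmem ⟨⟨⟨hx0, hxR⟩, ⟨by linarith, hyR⟩⟩, h⟩
        have hN : m * (y - x) ≤ Z y - Z x :=
          mvtA x ⟨hx0, by linarith⟩ y ⟨by linarith, hyR⟩ (by linarith)
        nlinarith
      · -- case 3: y large, x ≤ R
        push_neg at hyR
        have h1 : 0 ≤ Z R - Z x :=
          le_trans (by nlinarith) (mvtA x ⟨hx0, by linarith⟩ R ⟨hR0.le, by linarith⟩ hxR)
        have h2 : (2*T) * (y - R) ≤ Z y - Z R :=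
          mvtB R Set.self_mem_Ici y (Set.mem_Ici.mpr (by linarith)) (by linarith)
        nlinarith
    · -- case 2: x large
      push_neg at hxR
      have h2 : (2*T) * (y - x) ≤ Z y - Z x :=
        mvtB x (Set.mem_Ici.mpr hxR.le) y (Set.mem_Ici.mpr (by linarith)) (by linarith)
      nlinarith
  have hgT : T ≤ g (x, y) := by
    rw [hg]
    simp only
    rw [le_div_iff₀ hd]
    exact key
  calc g q ≤ M := hqmin hq0K
  _ ≤ T := hMT.le
  _ ≤ g (x, y) := hgT
end

section
/- Let β > 0 and let Z : [0,∞) → ℝ be continuously differentiable such that Z′ is positive and log-convex on [0,∞) and Z′(x) → ∞ as x → ∞. Define g(x,y) = (Z(y) − Z(x))/(y − x − β) on the domain D = {(x,y) : x ≥ 0, y > x + β}. Then there is a unique pair (a*,b*) ∈ D minimizing g over D; moreover b* > c*, where c* := sup{c ≥ 0 : Z′(c) ≤ Z′(x) for all x ≥ 0}. -/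
open Filter Set Topology

section Aux


section Aux

variable {Z Z' : ℝ → ℝ}

lemma slope_mem_aux (hZderiv : ∀ x ∈ Set.Ici (0 : ℝ), HasDerivAt Z (Z' x) x)
    {x y : ℝ} (hx : 0 ≤ x) (hxy : x < y) :
    ∃ ξ ∈ Set.Ioo x y, Z' ξ = (Z y - Z x) / (y - x) := by
  have hcont : ContinuousOn Z (Set.Icc x y) := fun t ht =>
    ((hZderiv t (hx.trans ht.1)).continuousAt).continuousWithinAt
  exact exists_hasDerivAt_eq_slope Z Z' hxy hcont
    (fun t ht => hZderiv t (hx.trans ht.1.le))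

lemma diff_lt_aux (hZderiv : ∀ x ∈ Set.Ici (0 : ℝ), HasDerivAt Z (Z' x) x)
    {x y c : ℝ} (hx : 0 ≤ x) (hxy : x < y)
    (h : ∀ t ∈ Set.Ioo x y, Z' t < c) : Z y - Z x < c * (y - x) := by
  obtain ⟨ξ, hξ, heq⟩ := slope_mem_aux hZderiv hx hxy
  have := h ξ hξ
  rw [heq, div_lt_iff₀ (by linarith)] at this
  linarith

lemma diff_gt_aux (hZderiv : ∀ x ∈ Set.Ici (0 : ℝ), HasDerivAt Z (Z' x) x)
    {x y c : ℝ} (hx : 0 ≤ x) (hxy : x < y)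
    (h : ∀ t ∈ Set.Ioo x y, c < Z' t) : c * (y - x) < Z y - Z x := by
  obtain ⟨ξ, hξ, heq⟩ := slope_mem_aux hZderiv hx hxy
  have := h ξ hξ
  rw [heq, lt_div_iff₀ (by linarith)] at this
  linarith

lemma diff_ge_aux (hZderiv : ∀ x ∈ Set.Ici (0 : ℝ), HasDerivAt Z (Z' x) x)
    {x y c : ℝ} (hx : 0 ≤ x) (hxy : x ≤ y)
    (h : ∀ t ∈ Set.Ioo x y, c ≤ Z' t) : c * (y - x) ≤ Z y - Z x := by
  rcases eq_or_lt_of_le hxy with rfl | hlt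
  · simp
  obtain ⟨ξ, hξ, heq⟩ := slope_mem_aux hZderiv hx hlt
  have := h ξ hξ
  rw [heq, le_div_iff₀ (by linarith)] at this
  linarith

lemma diff_le_aux (hZderiv : ∀ x ∈ Set.Ici (0 : ℝ), HasDerivAt Z (Z' x) x)
    {x y c : ℝ} (hx : 0 ≤ x) (hxy : x ≤ y)
    (h : ∀ t ∈ Set.Ioo x y, Z' t ≤ c) : Z y - Z x ≤ c * (y - x) := by
  rcases eq_or_lt_of_le hxy with rfl | hlt
  · simp
  obtain ⟨ξ, hξ, heq⟩ := slope_mem_aux hZderiv hx hlt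
  have := h ξ hξ
  rw [heq, div_le_iff₀ (by linarith)] at this
  linarith

lemma exists_slope_lt_aux (hZderiv : ∀ x ∈ Set.Ici (0 : ℝ), HasDerivAt Z (Z' x) x)
    {x y M : ℝ} (hx : 0 ≤ x) (hxy : x < y) (h : Z y - Z x < M * (y - x)) :
    ∃ ξ, x < ξ ∧ ξ < y ∧ Z' ξ < M := by
  obtain ⟨ξ, hξ, heq⟩ := slope_mem_aux hZderiv hx hxy
  refine ⟨ξ, hξ.1, hξ.2, ?_⟩
  rw [heq, div_lt_iff₀ (by linarith)]
  linarith

lemma comb_rep {p w q : ℝ} (h1 : p < w) (h2 : w < q) :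
    ∃ t : ℝ, 0 < t ∧ t < 1 ∧ w = t * p + (1 - t) * q := by
  have hqp : 0 < q - p := by linarith
  refine ⟨(q - w) / (q - p), div_pos (by linarith) hqp, ?_, ?_⟩
  · rw [div_lt_one hqp]; linarith
  · have hqp' : q - p ≠ 0 := ne_of_gt hqp
    field_simp
    ring

lemma between_lt_aux (hZ'pos : ∀ x ≥ (0 : ℝ), 0 < Z' x)
    (hZ'lc : ∀ x₁ ∈ Set.Ici (0 : ℝ), ∀ x₂ ∈ Set.Ici (0 : ℝ), ∀ t ∈ Set.Icc (0 : ℝ) 1,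
      Z' (t * x₁ + (1 - t) * x₂) ≤ Z' x₁ ^ t * Z' x₂ ^ (1 - t))
    {p w q M : ℝ} (hp : 0 ≤ p) (h1 : p < w) (h2 : w < q) (hM : 0 < M)
    (hZp : Z' p ≤ M) (hZq : Z' q ≤ M) (hstrict : Z' p < M ∨ Z' q < M) :
    Z' w < M := by
  obtain ⟨t, ht0, ht1, hw⟩ := comb_rep h1 h2
  have hq0 : (0:ℝ) ≤ q := by linarith
  have hle := hZ'lc p hp q hq0 t ⟨ht0.le, ht1.le⟩
  rw [← hw] at hle
  have hpp := (hZ'pos p hp).le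
  have hqp := (hZ'pos q hq0).le
  have hMt : M = M ^ t * M ^ (1 - t) := by
    rw [← Real.rpow_add hM]; simp
  have hfin : Z' p ^ t * Z' q ^ (1 - t) < M ^ t * M ^ (1 - t) := by
    rcases hstrict with hs | hs
    · exact mul_lt_mul (Real.rpow_lt_rpow hpp hs ht0) (Real.rpow_le_rpow hqp hZq (by linarith))
        (Real.rpow_pos_of_pos (hZ'pos q hq0) _) (Real.rpow_pos_of_pos hM _).le
    · exact mul_lt_mul' (Real.rpow_le_rpow hpp hZp ht0.le) (Real.rpow_lt_rpow hqp hs (by linarith))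
        (Real.rpow_pos_of_pos (hZ'pos q hq0) _).le (Real.rpow_pos_of_pos hM _)
  calc Z' w ≤ Z' p ^ t * Z' q ^ (1 - t) := hle
    _ < M ^ t * M ^ (1 - t) := hfin
    _ = M := hMt.symm

lemma before_gt_aux (hZ'pos : ∀ x ≥ (0 : ℝ), 0 < Z' x)
    (hZ'lc : ∀ x₁ ∈ Set.Ici (0 : ℝ), ∀ x₂ ∈ Set.Ici (0 : ℝ), ∀ t ∈ Set.Icc (0 : ℝ) 1,
      Z' (t * x₁ + (1 - t) * x₂) ≤ Z' x₁ ^ t * Z' x₂ ^ (1 - t))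
    {x w z M : ℝ} (hx : 0 ≤ x) (h1 : x < w) (h2 : w < z) (hM : 0 < M)
    (hZw : M ≤ Z' w) (hZz : Z' z < M) : M < Z' x := by
  by_contra hcon
  push_neg at hcon
  have : Z' w < M := between_lt_aux hZ'pos hZ'lc hx h1 h2 hM hcon hZz.le (Or.inr hZz)
  linarith




lemma minimizer_core (β : ℝ) (hβ : 0 < β)
    (hZderiv : ∀ x ∈ Set.Ici (0 : ℝ), HasDerivAt Z (Z' x) x)
    (hZ'cont : ContinuousOn Z' (Set.Ici 0))
    (hZ'pos : ∀ x ≥ (0 : ℝ), 0 < Z' x)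
    {a b M : ℝ} (ha : 0 ≤ a) (hab : a + β < b)
    (heq : Z b - Z a = M * (b - a - β))
    (hkey : ∀ x y : ℝ, 0 ≤ x → x + β < y → M * (y - x - β) ≤ Z y - Z x) :
    0 < M ∧ Z' b = M ∧ ∃ ξ, a < ξ ∧ ξ < b ∧ Z' ξ < M := by
  have hb0 : 0 < b := by linarith
  have hZba : 0 < Z b - Z a := by
    have := diff_gt_aux hZderiv (c := 0) ha (by linarith : a < b)
      (fun t ht => hZ'pos t (by linarith [ht.1]))
    linarith [this]
  have hM : 0 < M := by nlinarith
  -- Z' b = M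
  have hcb : ContinuousAt Z' b :=
    (hZ'cont b hb0.le).continuousAt (Ici_mem_nhds hb0)
  have hZ'b : Z' b = M := by
    rcases lt_trichotomy (Z' b) M with hlt | heq' | hgt
    · -- Z' < M on a right neighborhood; pushing b up decreases f
      exfalso
      obtain ⟨ε, hε, hball'⟩ := Metric.mem_nhds_iff.mp (hcb.preimage_mem_nhds (Iio_mem_nhds hlt))
      have hball : ∀ t : ℝ, |t - b| < ε → Z' t < M := fun t ht =>
        hball' (by rwa [Metric.mem_ball, Real.dist_eq])
      set y := b + ε / 2 with hy
      have h1 : Z y - Z b < M * (y - b) := by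
        apply diff_lt_aux hZderiv hb0.le (by simp [hy]; linarith)
        intro t ht
        apply hball
        rw [abs_lt]
        simp [hy] at ht
        constructor <;> linarith [ht.1, ht.2]
      have h2 := hkey a y ha (by simp [hy]; linarith)
      nlinarith
    · exact heq'
    · exfalso
      obtain ⟨ε, hε, hball'⟩ := Metric.mem_nhds_iff.mp (hcb.preimage_mem_nhds (Ioi_mem_nhds hgt))
      have hball : ∀ t : ℝ, |t - b| < ε → M < Z' t := fun t ht =>
        hball' (by rwa [Metric.mem_ball, Real.dist_eq])
      set δ := min (ε / 2) ((b - a - β) / 2) with hδ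
      have hδ0 : 0 < δ := by
        apply lt_min (by linarith) (by linarith)
      have hδb : δ < b - a - β := by
        calc δ ≤ (b - a - β)/2 := min_le_right _ _
        _ < b - a - β := by linarith
      have hδε : δ ≤ ε / 2 := min_le_left _ _
      set x' := b - δ with hx'
      have hx'0 : 0 ≤ x' := by simp [hx']; linarith
      have h1 : M * (b - x') < Z b - Z x' := by
        apply diff_gt_aux hZderiv hx'0 (by simp [hx']; linarith)
        intro t ht
        apply hball
        rw [abs_lt]
        simp [hx'] at ht
        constructor <;> linarith [ht.1, ht.2]
      have h2 := hkey a x' ha (by simp [hx']; linarith)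
      nlinarith
  refine ⟨hM, hZ'b, ?_⟩
  apply exists_slope_lt_aux hZderiv ha (by linarith : a < b)
  nlinarith


lemma b_lt_false (β : ℝ) (hβ : 0 < β)
    (hZderiv : ∀ x ∈ Set.Ici (0 : ℝ), HasDerivAt Z (Z' x) x)
    (hZ'pos : ∀ x ≥ (0 : ℝ), 0 < Z' x)
    (hZ'lc : ∀ x₁ ∈ Set.Ici (0 : ℝ), ∀ x₂ ∈ Set.Ici (0 : ℝ), ∀ t ∈ Set.Icc (0 : ℝ) 1,
      Z' (t * x₁ + (1 - t) * x₂) ≤ Z' x₁ ^ t * Z' x₂ ^ (1 - t))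
    {a b a' b' M : ℝ} (ha : 0 ≤ a) (hab : a + β < b) (ha' : 0 ≤ a') (hab' : a' + β < b')
    (heq : Z b - Z a = M * (b - a - β))
    (hkey : ∀ x y : ℝ, 0 ≤ x → x + β < y → M * (y - x - β) ≤ Z y - Z x)
    (hM : 0 < M) (hZ'b : Z' b = M) (hZ'b' : Z' b' = M)
    {ξ' : ℝ} (hξ'1 : a' < ξ') (hξ'2 : ξ' < b') (hξ'3 : Z' ξ' < M)
    (hbb : b < b') : False := by
  have hξ'0 : 0 ≤ ξ' := by linarith
  rcases lt_trichotomy ξ' b with h | h | h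
  · have := between_lt_aux hZ'pos hZ'lc hξ'0 h hbb hM hξ'3.le hZ'b'.le (Or.inl hξ'3)
    linarith [hZ'b ▸ this]
  · rw [h] at hξ'3; linarith [hZ'b ▸ hξ'3]
  · have hb0 : (0:ℝ) ≤ b := by linarith
    have hall : ∀ t ∈ Set.Ioo b ξ', Z' t < M := fun t ht =>
      between_lt_aux hZ'pos hZ'lc hb0 ht.1 ht.2 hM hZ'b.le hξ'3.le (Or.inr hξ'3)
    have h1 : Z ξ' - Z b < M * (ξ' - b) := diff_lt_aux hZderiv hb0 h hall
    have h2 := hkey a ξ' ha (by linarith)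
    nlinarith

lemma a_lt_false (β : ℝ) (hβ : 0 < β)
    (hZderiv : ∀ x ∈ Set.Ici (0 : ℝ), HasDerivAt Z (Z' x) x)
    (hZ'cont : ContinuousOn Z' (Set.Ici 0))
    (hZ'pos : ∀ x ≥ (0 : ℝ), 0 < Z' x)
    (hZ'lc : ∀ x₁ ∈ Set.Ici (0 : ℝ), ∀ x₂ ∈ Set.Ici (0 : ℝ), ∀ t ∈ Set.Icc (0 : ℝ) 1,
      Z' (t * x₁ + (1 - t) * x₂) ≤ Z' x₁ ^ t * Z' x₂ ^ (1 - t))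
    {a b a' M : ℝ} (ha : 0 ≤ a) (hab : a + β < b) (ha' : 0 ≤ a') (hab' : a' + β < b)
    (heq : Z b - Z a = M * (b - a - β))
    (heq' : Z b - Z a' = M * (b - a' - β))
    (hkey : ∀ x y : ℝ, 0 ≤ x → x + β < y → M * (y - x - β) ≤ Z y - Z x)
    (hM : 0 < M)
    (haa : a < a') : False := by
  have ha'0 : 0 < a' := lt_of_le_of_lt ha haa
  -- Z' a' ≥ M
  have hZ'a' : M ≤ Z' a' := by
    by_contra hcon
    push_neg at hcon
    have hca : ContinuousAt Z' a' := (hZ'cont a' ha'0.le).continuousAt (Ici_mem_nhds ha'0)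
    obtain ⟨ε, hε, hball'⟩ := Metric.mem_nhds_iff.mp (hca.preimage_mem_nhds (Iio_mem_nhds hcon))
    have hball : ∀ t : ℝ, |t - a'| < ε → Z' t < M := fun t ht =>
      hball' (by rwa [Metric.mem_ball, Real.dist_eq])
    set δ := min (ε / 2) (a' / 2) with hδ
    have hδ0 : 0 < δ := lt_min (by linarith) (by linarith)
    have hδε : δ ≤ ε / 2 := min_le_left _ _
    have hδa : δ ≤ a' / 2 := min_le_right _ _
    set x' := a' - δ with hx'
    have hx'0 : 0 ≤ x' := by simp only [hx']; linarith
    have h1 : Z a' - Z x' < M * (a' - x') := by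
      apply diff_lt_aux hZderiv hx'0 (by simp only [hx']; linarith)
      intro t ht
      apply hball
      rw [abs_lt]
      simp only [hx'] at ht
      obtain ⟨ht1, ht2⟩ := ht
      constructor <;> linarith
    have h2 := hkey x' b hx'0 (by simp only [hx']; linarith)
    nlinarith
  -- ζ with Z' ζ < M in (a', b)
  obtain ⟨ζ, hζ1, hζ2, hζ3⟩ := exists_slope_lt_aux hZderiv (M := M) ha'0.le (by linarith : a' < b)
    (by nlinarith)
  -- Z' > M on (a, a')
  have hall : ∀ t ∈ Set.Ioo a a', M < Z' t := fun t ht =>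
    before_gt_aux hZ'pos hZ'lc (le_trans ha ht.1.le) ht.2 (by linarith) hM hZ'a' hζ3
  have h3 : M * (a' - a) < Z a' - Z a := diff_gt_aux hZderiv ha haa hall
  nlinarith


lemma exists_min_Z' (hZ'cont : ContinuousOn Z' (Set.Ici 0))
    (htop : Tendsto Z' atTop atTop) :
    ∃ x₀ : ℝ, 0 ≤ x₀ ∧ ∀ x, 0 ≤ x → Z' x₀ ≤ Z' x := by
  obtain ⟨N, hN⟩ := eventually_atTop.mp (htop.eventually_ge_atTop (Z' 0 + 1))
  set N' := max N 0 with hN'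
  obtain ⟨x₀, hx₀mem, hx₀min⟩ := isCompact_Icc.exists_isMinOn
    (⟨0, by simp [hN']⟩ : (Set.Icc (0:ℝ) N').Nonempty)
    (hZ'cont.mono (fun t ht => ht.1))
  refine ⟨x₀, hx₀mem.1, fun x hx => ?_⟩
  rcases le_or_gt x N' with h | h
  · exact isMinOn_iff.mp hx₀min x ⟨hx, h⟩
  · have h1 := hN x (le_trans (le_max_left _ _) h.le)
    have h2 := isMinOn_iff.mp hx₀min 0 ⟨le_refl _, le_max_right _ _⟩
    linarith

set_option maxHeartbeats 1000000 in
lemma exists_minimizer (β : ℝ) (hβ : 0 < β)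
    (hZderiv : ∀ x ∈ Set.Ici (0 : ℝ), HasDerivAt Z (Z' x) x)
    (hZ'cont : ContinuousOn Z' (Set.Ici 0))
    (hZ'pos : ∀ x ≥ (0 : ℝ), 0 < Z' x)
    (htop : Tendsto Z' atTop atTop) :
    ∃ q : ℝ × ℝ, (0 ≤ q.1 ∧ q.1 + β < q.2) ∧ ∀ r : ℝ × ℝ, 0 ≤ r.1 → r.1 + β < r.2 →
      (Z q.2 - Z q.1) / (q.2 - q.1 - β) ≤ (Z r.2 - Z r.1) / (r.2 - r.1 - β) := by
  set G : ℝ × ℝ → ℝ := fun q => (Z q.2 - Z q.1) / (q.2 - q.1 - β) with hG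
  obtain ⟨x₀, hx₀0, hx₀min⟩ := exists_min_Z' hZ'cont htop
  set m := Z' x₀ with hm
  have hm0 : 0 < m := hZ'pos x₀ hx₀0
  have hlow : ∀ x y : ℝ, 0 ≤ x → x ≤ y → m * (y - x) ≤ Z y - Z x := fun x y hx hxy =>
    diff_ge_aux hZderiv hx hxy (fun t ht => hx₀min t (le_trans hx ht.1.le))
  set M₀ := Z (β + 1) - Z 0 with hM₀
  have hM₀m : m * (β + 1) ≤ M₀ := by
    have := hlow 0 (β + 1) (le_refl _) (by linarith)
    simpa using this
  have hM₀0 : 0 < M₀ := lt_of_lt_of_le (by nlinarith) hM₀m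
  have hMm : m * β ≤ M₀ - m := by nlinarith
  have hMm0 : 0 < M₀ - m := lt_of_lt_of_le (by nlinarith) hMm
  set s₀ := m * β / (M₀ - m) with hs₀
  have hs₀0 : 0 < s₀ := div_pos (by nlinarith) hMm0
  have hs₀1 : s₀ ≤ 1 := by rw [hs₀, div_le_one hMm0]; linarith
  obtain ⟨N, hN⟩ := eventually_atTop.mp (htop.eventually_ge_atTop (2 * M₀ + 1))
  set X := max N 0 with hX
  have hX0 : 0 ≤ X := le_max_right _ _
  have hXbig : ∀ t : ℝ, X ≤ t → 2 * M₀ + 1 ≤ Z' t := fun t ht =>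
    hN t (le_trans (le_max_left _ _) ht)
  set Y := max X (β + 1) with hY
  have hY0 : 0 < Y := lt_of_lt_of_le (by linarith) (le_max_right _ _)
  have hYX : X ≤ Y := le_max_left _ _
  have hYβ : β + 1 ≤ Y := le_max_right _ _
  set K : Set (ℝ × ℝ) := (Set.Icc 0 X ×ˢ Set.Icc 0 (2 * Y)) ∩
    {q : ℝ × ℝ | q.1 + β + s₀ ≤ q.2} with hK
  have hq₀K : ((0 : ℝ), β + 1) ∈ K := by
    constructor
    · rw [Set.mem_prod]
      constructor <;> simp only [Prod.fst, Prod.snd, Set.mem_Icc] <;>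
        constructor <;> linarith
    · simp only [Set.mem_setOf_eq]
      linarith
  have hKcompact : IsCompact K :=
    (isCompact_Icc.prod isCompact_Icc).inter_right
      (isClosed_le (by fun_prop) continuous_snd)
  have hKD : ∀ q ∈ K, 0 ≤ q.1 ∧ q.1 + β < q.2 ∧ s₀ ≤ q.2 - q.1 - β := by
    rintro q ⟨⟨⟨h1, _⟩, _⟩, h3⟩
    simp only [Set.mem_setOf_eq] at h3
    exact ⟨h1, by linarith, by linarith⟩
  have hZcont : ContinuousOn Z (Set.Ici 0) := fun t ht =>
    (hZderiv t ht).continuousAt.continuousWithinAt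
  have hGcont : ContinuousOn G K := by
    apply ContinuousOn.div
    · apply ContinuousOn.sub
      · exact hZcont.comp continuous_snd.continuousOn
          (fun q hq => le_trans (by linarith [hβ, (hKD q hq).1, hs₀0.le]) (hKD q hq).2.1.le)
      · exact hZcont.comp continuous_fst.continuousOn (fun q hq => (hKD q hq).1)
    · fun_prop
    · intro q hq
      have := (hKD q hq).2.1
      intro hzero
      rw [sub_sub, sub_eq_zero] at hzero
      rw [hzero] at this
      linarith
  obtain ⟨qs, hqsK, hqsmin⟩ := hKcompact.exists_isMinOn ⟨_, hq₀K⟩ hGcont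
  have hqsD := hKD qs hqsK
  have hGq₀ : G ((0 : ℝ), β + 1) = M₀ := by
    simp only [hG, hM₀]
    norm_num
  have hqsM₀ : G qs ≤ M₀ := by
    rw [← hGq₀]; exact isMinOn_iff.mp hqsmin _ hq₀K
  refine ⟨qs, ⟨hqsD.1, hqsD.2.1⟩, ?_⟩
  rintro ⟨x, y⟩ hx hxy
  simp only at hx hxy ⊢
  have hs0 : 0 < y - x - β := by linarith
  have hy0 : 0 < y := by linarith
  by_cases hcase : (Z y - Z x) / (y - x - β) ≤ M₀
  swap
  · push_neg at hcase
    exact le_trans hqsM₀ hcase.le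
  · -- show (x,y) ∈ K
    have hZxy : Z y - Z x ≤ M₀ * (y - x - β) := by
      rw [div_le_iff₀ hs0] at hcase
      linarith [hcase]
    have hsv : s₀ ≤ y - x - β := by
      have h1 : m * (y - x) ≤ Z y - Z x := hlow x y hx (by linarith)
      have : m * β ≤ (M₀ - m) * (y - x - β) := by nlinarith
      rw [hs₀, div_le_iff₀ hMm0]
      nlinarith
    have hxX : x ≤ X := by
      by_contra hcon
      push_neg at hcon
      have h1 : (2 * M₀ + 1) * (y - x) ≤ Z y - Z x :=
        diff_ge_aux hZderiv hx (by linarith)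
          (fun t ht => hXbig t (by linarith [ht.1, hcon]))
      nlinarith
    have hyY : y ≤ 2 * Y := by
      by_contra hcon
      push_neg at hcon
      have h1 : (2 * M₀ + 1) * (y - Y) ≤ Z y - Z Y :=
        diff_ge_aux hZderiv hY0.le (by linarith)
          (fun t ht => hXbig t (by linarith [ht.1]))
      have h2 : m * (Y - x) ≤ Z Y - Z x := hlow x Y hx (by linarith)
      have h3 : 0 ≤ Y - x := by linarith
      nlinarith [mul_nonneg hm0.le h3]
    have hmem : ((x, y) : ℝ × ℝ) ∈ K := by
      constructor
      · rw [Set.mem_prod]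
        constructor <;> simp only [Prod.fst, Prod.snd, Set.mem_Icc] <;>
          constructor <;> linarith
      · simp only [Set.mem_setOf_eq]
        linarith
    exact isMinOn_iff.mp hqsmin _ hmem


end Aux

open Filter

set_option maxHeartbeats 1000000 in
/-- If Z′ is positive and log-convex on [0,∞) with Z′(x) → ∞,
then g(x,y) = (Z(y) − Z(x))/(y − x − β) has a unique minimizer (a*,b*) over
D = {x ≥ 0, y > x + β}, and b* > c* where c* is the largest minimizer of Z′. -/
theorem unique_optimal_pair
    (β : ℝ) (hβ : 0 < β)
    (Z Z' : ℝ → ℝ)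
    (hZderiv : ∀ x ∈ Set.Ici (0 : ℝ), HasDerivAt Z (Z' x) x)
    (hZ'cont : ContinuousOn Z' (Set.Ici 0))
    (hZ'pos : ∀ x ≥ (0 : ℝ), 0 < Z' x)
    (hZ'lc : ∀ x₁ ∈ Set.Ici (0 : ℝ), ∀ x₂ ∈ Set.Ici (0 : ℝ), ∀ t ∈ Set.Icc (0 : ℝ) 1,
      Z' (t * x₁ + (1 - t) * x₂) ≤ Z' x₁ ^ t * Z' x₂ ^ (1 - t))
    (htop : Tendsto Z' atTop atTop)
    (g : ℝ × ℝ → ℝ)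
    (hg : ∀ q : ℝ × ℝ, g q = (Z q.2 - Z q.1) / (q.2 - q.1 - β))
    (D : Set (ℝ × ℝ))
    (hD : D = {q : ℝ × ℝ | 0 ≤ q.1 ∧ q.1 + β < q.2}) :
    (∃! q : ℝ × ℝ, q ∈ D ∧ ∀ r ∈ D, g q ≤ g r) ∧
    ∀ q : ℝ × ℝ, q ∈ D → (∀ r ∈ D, g q ≤ g r) →
      sSup {c : ℝ | 0 ≤ c ∧ ∀ x, 0 ≤ x → Z' c ≤ Z' x} < q.2 := by
  subst hD
  -- facts for an arbitrary minimizer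
  have hfacts : ∀ a b : ℝ, 0 ≤ a → a + β < b →
      (∀ r ∈ {q : ℝ × ℝ | 0 ≤ q.1 ∧ q.1 + β < q.2}, g (a, b) ≤ g r) →
      (Z b - Z a = g (a, b) * (b - a - β)) ∧
      (∀ x y : ℝ, 0 ≤ x → x + β < y → g (a, b) * (y - x - β) ≤ Z y - Z x) := by
    intro a b ha hab hmin
    have hd : (0:ℝ) < b - a - β := by linarith
    constructor
    · rw [hg (a, b)]
      simp only
      rw [div_mul_cancel₀ _ (ne_of_gt hd)]
    · intro x y hx hxy
      have hd' : (0:ℝ) < y - x - β := by linarith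
      have h1 := hmin (x, y) ⟨hx, hxy⟩
      rw [hg (x, y)] at h1
      simp only at h1
      rw [← le_div_iff₀ hd']
      exact h1
  -- existence
  obtain ⟨qs, ⟨hqs1, hqs2⟩, hqsmin⟩ := exists_minimizer β hβ hZderiv hZ'cont hZ'pos htop
  have hqsmin' : ∀ r ∈ {q : ℝ × ℝ | 0 ≤ q.1 ∧ q.1 + β < q.2}, g qs ≤ g r := by
    rintro r ⟨hr1, hr2⟩
    rw [hg qs, hg r]
    exact hqsmin r hr1 hr2
  constructor
  · refine ⟨qs, ⟨⟨hqs1, hqs2⟩, hqsmin'⟩, ?_⟩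
    rintro ⟨a', b'⟩ ⟨⟨ha', hab'⟩, hmin'⟩
    obtain ⟨a, b⟩ := qs
    simp only at hqs1 hqs2 hmin' ha' hab' hqsmin'
    -- common value
    have hM : g (a', b') = g (a, b) :=
      le_antisymm (hmin' (a, b) ⟨hqs1, hqs2⟩) (hqsmin' (a', b') ⟨ha', hab'⟩)
    set M := g (a, b) with hMdef
    obtain ⟨heq, hkey⟩ := hfacts a b hqs1 hqs2 hqsmin'
    obtain ⟨heq', hkey'⟩ := hfacts a' b' ha' hab' hmin'
    rw [hM] at heq' hkey'
    obtain ⟨hM0, hZ'b, ξ, hξ1, hξ2, hξ3⟩ :=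
      minimizer_core β hβ hZderiv hZ'cont hZ'pos hqs1 hqs2 heq hkey
    obtain ⟨_, hZ'b', ξ', hξ'1, hξ'2, hξ'3⟩ :=
      minimizer_core β hβ hZderiv hZ'cont hZ'pos ha' hab' heq' hkey
    -- b' = b
    have hbb : b' = b := by
      rcases lt_trichotomy b' b with h | h | h
      · exact absurd h (fun h => b_lt_false β hβ hZderiv hZ'pos hZ'lc ha' hab' hqs1 hqs2
          heq' hkey hM0 hZ'b' hZ'b hξ1 hξ2 hξ3 h)
      · exact h
      · exact absurd h (fun h => b_lt_false β hβ hZderiv hZ'pos hZ'lc hqs1 hqs2 ha' hab'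
          heq hkey hM0 hZ'b hZ'b' hξ'1 hξ'2 hξ'3 h)
    subst hbb
    -- a' = a
    have haa : a' = a := by
      rcases lt_trichotomy a' a with h | h | h
      · exact absurd h (fun h => a_lt_false β hβ hZderiv hZ'cont hZ'pos hZ'lc ha' hab'
          hqs1 hqs2 heq' heq hkey hM0 h)
      · exact h
      · exact absurd h (fun h => a_lt_false β hβ hZderiv hZ'cont hZ'pos hZ'lc hqs1 hqs2
          ha' hab' heq heq' hkey hM0 h)
    rw [haa]
  · -- the sSup bound
    rintro ⟨a, b⟩ ⟨ha, hab⟩ hmin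
    simp only at ha hab hmin ⊢
    obtain ⟨heq, hkey⟩ := hfacts a b ha hab hmin
    obtain ⟨hM0, hZ'b, ξ, hξ1, hξ2, hξ3⟩ :=
      minimizer_core β hβ hZderiv hZ'cont hZ'pos ha hab heq hkey
    set M := g (a, b) with hMdef
    set T := {c : ℝ | 0 ≤ c ∧ ∀ x, 0 ≤ x → Z' c ≤ Z' x} with hT
    obtain ⟨x₀, hx₀0, hx₀min⟩ := exists_min_Z' hZ'cont htop
    have hx₀T : x₀ ∈ T := ⟨hx₀0, hx₀min⟩
    have hTbdd : BddAbove T := by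
      obtain ⟨N, hN⟩ := eventually_atTop.mp (htop.eventually_ge_atTop (Z' 0 + 1))
      refine ⟨max N 0, fun c hc => ?_⟩
      by_contra hcon
      push_neg at hcon
      have h1 := hN c (le_trans (le_max_left _ _) hcon.le)
      have h2 := hc.2 0 le_rfl
      linarith
    have hTclosed : IsClosed T := by
      have : T = ⋂ (x : ℝ) (_ : x ∈ Set.Ici (0:ℝ)), (Set.Ici (0:ℝ) ∩ Z' ⁻¹' Set.Iic (Z' x)) := by
        ext c
        simp only [Set.mem_iInter, Set.mem_inter_iff, Set.mem_Ici, Set.mem_preimage,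
          Set.mem_Iic, Set.mem_setOf_eq, hT]
        constructor
        · rintro ⟨h0, h1⟩ x hx
          exact ⟨h0, h1 x hx⟩
        · intro h
          exact ⟨(h 0 le_rfl).1, fun x hx => (h x hx).2⟩
      rw [this]
      exact isClosed_iInter fun x => isClosed_iInter fun _ =>
        hZ'cont.preimage_isClosed_of_isClosed isClosed_Ici isClosed_Iic
    have hc₀T : sSup T ∈ T := hTclosed.csSup_mem ⟨x₀, hx₀T⟩ hTbdd
    have hξ0 : (0:ℝ) ≤ ξ := le_trans ha hξ1.le
    have hZc₀ : Z' (sSup T) < M := lt_of_le_of_lt (hc₀T.2 ξ hξ0) hξ3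
    rcases lt_trichotomy (sSup T) b with h | h | h
    · exact h
    · rw [h] at hZc₀
      rw [hZ'b] at hZc₀
      exact absurd hZc₀ (lt_irrefl M)
    · exfalso
      have := between_lt_aux hZ'pos hZ'lc hξ0 hξ2 h hM0 hξ3.le hZc₀.le (Or.inl hξ3)
      rw [hZ'b] at this
      exact absurd this (lt_irrefl M)
end Aux
end

section
/- Let β > 0, let 0 ≤ a* and b* > a* + β, and let Z : ℝ → ℝ be nondecreasing with Z(b*) > Z(a*). Set K := (Z(b*) − Z(a*))/(b* − a* − β) > 0 and assume the minimality property: for all x ≥ 0 and y > x + β, (Z(y) − Z(x))/(y − x − β) ≥ K. Define v(x) = Z(x)/K for x ≤ b* and v(x) = x − b* + Z(b*)/K for x > b*. Then for all 0 ≤ x ≤ y, v(y) − v(x) ≥ y − x − β. -/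
/-- For the candidate value function v of the (a*,b*)-impulse
strategy, built from a nondecreasing Z with the minimality property, the
growth condition v(y) − v(x) ≥ y − x − β holds for all 0 ≤ x ≤ y. -/
theorem growth_condition
    (β a b : ℝ) (hβ : 0 < β) (ha : 0 ≤ a) (hb : a + β < b)
    (Z : ℝ → ℝ) (hZmono : Monotone Z) (hZab : Z a < Z b)
    (K : ℝ) (hK : K = (Z b - Z a) / (b - a - β))
    (hmin : ∀ x ≥ (0 : ℝ), ∀ y > x + β, K ≤ (Z y - Z x) / (y - x - β))
    (v : ℝ → ℝ)
    (hv1 : ∀ x ≤ b, v x = Z x / K)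
    (hv2 : ∀ x > b, v x = x - b + Z b / K) :
    0 < K ∧ ∀ x y : ℝ, 0 ≤ x → x ≤ y → y - x - β ≤ v y - v x := by
  have hKpos : 0 < K := by
    rw [hK]
    apply div_pos (by linarith) (by linarith)
  have key : ∀ x : ℝ, 0 ≤ x → ∀ y : ℝ, x ≤ y → K * (y - x - β) ≤ Z y - Z x := by
    intro x hx y hxy
    by_cases h : x + β < y
    · have h1 := hmin x hx y h
      have h2 : 0 < y - x - β := by linarith
      calc K * (y - x - β) ≤ ((Z y - Z x) / (y - x - β)) * (y - x - β) := by
            apply mul_le_mul_of_nonneg_right h1 (le_of_lt h2)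
        _ = Z y - Z x := div_mul_cancel₀ _ (ne_of_gt h2)
    · have h2 : y - x - β ≤ 0 := by linarith
      have h3 : Z x ≤ Z y := hZmono hxy
      nlinarith
  refine ⟨hKpos, fun x y hx hxy => ?_⟩
  by_cases hyb : y ≤ b
  · have hxb : x ≤ b := le_trans hxy hyb
    rw [hv1 x hxb, hv1 y hyb, ← sub_div, le_div_iff₀ hKpos, mul_comm]
    exact key x hx y hxy
  · push_neg at hyb
    by_cases hxb : x ≤ b
    · rw [hv1 x hxb, hv2 y hyb]
      have hk := key x hx b hxb
      have h2 : b - x - β ≤ (Z b - Z x) / K := by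
        rw [le_div_iff₀ hKpos, mul_comm]; exact hk
      have h3 : (Z b - Z x) / K = Z b / K - Z x / K := sub_div _ _ _
      linarith
    · push_neg at hxb
      rw [hv2 x hxb, hv2 y hyb]
      linarith
end
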